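/- Let Q be a connected Laplacian matrix on V = {0,…,n} with n ≥ 2. For every pair of distinct indices i, j ∈ V there exist a linear functional f on ℝ^{n+1} and a constant c ∈ ℝ such that f(u_S) = c for every nonempty proper S ⊊ V with i ∈ S and j ∉ S, and f(u_T) < c for every nonempty proper T ⊊ V with not (i ∈ T and j ∉ T). Consequently the convex hull of F_{i,j} is an exposed face (a facet) of the Delaunay polytope H_{Del_G}(O), and all elements of F_{i,j} are in convex position. -/

import Mathlib

open Finset

/-- A Laplacian matrix of a multigraph on vertex set `Fin (n+1)`:
symmetric, nonpositive off-diagonal entries, all row sums zero. -/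
def IsLaplacian (n : ℕ) (Q : Matrix (Fin (n+1)) (Fin (n+1)) ℤ) : Prop :=
  (∀ i j, Q i j = Q j i) ∧ (∀ i j, i ≠ j → Q i j ≤ 0) ∧ (∀ i, ∑ j, Q i j = 0)

/-- A connected Laplacian matrix: the graph with an edge `{i,j}` whenever
`b_{ij} = -Q i j > 0` is connected. -/
def IsConnectedLaplacian (n : ℕ) (Q : Matrix (Fin (n+1)) (Fin (n+1)) ℤ) : Prop :=
  IsLaplacian n Q ∧ (SimpleGraph.fromRel (fun i j => Q i j ≠ 0)).Connected

/-- The Laplacian lattice: the subgroup of `ℤ^{n+1}` generated by the rows of `Q`. -/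
noncomputable def lapLattice (n : ℕ) (Q : Matrix (Fin (n+1)) (Fin (n+1)) ℤ) :
    AddSubgroup (Fin (n+1) → ℤ) :=
  AddSubgroup.closure (Set.range fun i => Q i)

/-- The hyperplane `H_0 = {x ∈ ℝ^{n+1} : ∑ x i = 0}`. -/
def H0 (n : ℕ) : Set (Fin (n+1) → ℝ) := {x | ∑ i, x i = 0}

/-- The simplicial distance function on `H_0`: `d_△(p,q) = max_i (p i - q i)`. -/
noncomputable def simpDist (n : ℕ) (p q : Fin (n+1) → ℝ) : ℝ :=
  Finset.univ.sup' Finset.univ_nonempty fun i => p i - q i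

/-- Coercion of an integer vector to a real vector. -/
noncomputable def intVec (n : ℕ) (q : Fin (n+1) → ℤ) : Fin (n+1) → ℝ := fun i => (q i : ℝ)

/-- The root lattice `A_n = {x ∈ ℤ^{n+1} : ∑ x i = 0}`. -/
def rootLattice (n : ℕ) : AddSubgroup (Fin (n+1) → ℤ) where
  carrier := {x | ∑ i, x i = 0}
  add_mem' := by
    intro a b ha hb
    simp only [Set.mem_setOf_eq, Pi.add_apply, Finset.sum_add_distrib] at *
    omega
  zero_mem' := by simp
  neg_mem' := by
    intro a ha
    simp only [Set.mem_setOf_eq, Pi.neg_apply, Finset.sum_neg_distrib] at *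
    omega

/-- The `i`-th row of `Q` as a real vector. -/
noncomputable def rowVec (n : ℕ) (Q : Matrix (Fin (n+1)) (Fin (n+1)) ℤ) (i : Fin (n+1)) :
    Fin (n+1) → ℝ := fun j => (Q i j : ℝ)

/-- `u^σ_k = b_{σ(0)} + ⋯ + b_{σ(k)}`. -/
noncomputable def uPerm (n : ℕ) (Q : Matrix (Fin (n+1)) (Fin (n+1)) ℤ)
    (σ : Equiv.Perm (Fin (n+1))) (k : Fin (n+1)) : Fin (n+1) → ℝ :=
  ∑ j ∈ Finset.Iic k, rowVec n Q (σ j)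

/-- The Delaunay polytope of the origin: the union over all permutations `σ`
of the simplices `△_σ = conv{u^σ_0, …, u^σ_n}`. -/
noncomputable def HDel (n : ℕ) (Q : Matrix (Fin (n+1)) (Fin (n+1)) ℤ) :
    Set (Fin (n+1) → ℝ) :=
  ⋃ σ : Equiv.Perm (Fin (n+1)), convexHull ℝ (Set.range (uPerm n Q σ))

/-- `u_S = ∑_{i ∈ S} b_i`, as a real vector. -/
noncomputable def uCut (n : ℕ) (Q : Matrix (Fin (n+1)) (Fin (n+1)) ℤ)
    (S : Finset (Fin (n+1))) : Fin (n+1) → ℝ := ∑ i ∈ S, rowVec n Q i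

/-- The face `F_{i,j} = {u_S : ∅ ≠ S ⊊ V, i ∈ S, j ∉ S}`. -/
def cutFace (n : ℕ) (Q : Matrix (Fin (n+1)) (Fin (n+1)) ℤ) (i j : Fin (n+1)) :
    Set (Fin (n+1) → ℝ) :=
  {x | ∃ S : Finset (Fin (n+1)), S.Nonempty ∧ S ≠ Finset.univ ∧
    i ∈ S ∧ j ∉ S ∧ x = uCut n Q S}

/-- The Delaunay polytope of the origin as a convex hull,
`H_{Del_G}(O) = conv{u_S : ∅ ≠ S ⊆ V}`. -/
noncomputable def HDelConv (n : ℕ) (Q : Matrix (Fin (n+1)) (Fin (n+1)) ℤ) :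
    Set (Fin (n+1) → ℝ) :=
  convexHull ℝ {x | ∃ S : Finset (Fin (n+1)), S.Nonempty ∧ x = uCut n Q S}


/-!
The kernel of a connected Laplacian consists of the constant vectors (maximum principle), so by
rank–nullity and symmetry `Q` maps `ℝ^{n+1}` onto the hyperplane `∑ x = 0`. As
`u_S ⬝ᵥ w = ∑_{a ∈ S} (Q w)_a`, every `v` with `∑ v = 0` is therefore realised by a linear
functional taking the value `∑_{a ∈ S} v_a` at `u_S`. The choice `v = e_i - e_j` exposes `F_{i,j}`,
and `v = 1_S - |S|/(n+1)`, positive exactly on `S`, is maximised over all `u_T` only at `T = S`,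
which makes each `u_S` an exposed point of `conv F_{i,j}`.
-/

section Convex

variable {E : Type*} [AddCommGroup E] [Module ℝ E]

theorem mem_convexHull_sep_of_forall_le {G : Set E} (f : E →ₗ[ℝ] ℝ) {c : ℝ}
    (hf : ∀ y ∈ G, f y ≤ c) {x : E} (hx : x ∈ convexHull ℝ G) (hfx : f x = c) :
    x ∈ convexHull ℝ {y ∈ G | f y = c} := by
  classical
  rw [_root_.convexHull_eq] at hx
  obtain ⟨ι, t, w, z, hw₀, hw₁, hz, rfl⟩ := hx
  have hsum : ∑ i ∈ t, w i * (c - f (z i)) = 0 := by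
    rw [centerMass_eq_of_sum_1 _ _ hw₁, map_sum] at hfx
    simp only [map_smul, smul_eq_mul] at hfx
    simp only [mul_sub, sum_sub_distrib, ← sum_mul, hw₁, one_mul, hfx, sub_self]
  have hterm := (sum_eq_zero_iff_of_nonneg fun i hi =>
    mul_nonneg (hw₀ i hi) (sub_nonneg.2 (hf _ (hz i hi)))).1 hsum
  rw [← centerMass_filter_ne_zero]
  refine centerMass_mem_convexHull _ (fun i hi => hw₀ i (mem_filter.1 hi).1) ?_ fun i hi => ?_
  · rw [sum_filter_ne_zero, hw₁]
    exact one_pos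
  · obtain ⟨hi, hwi⟩ := mem_filter.1 hi
    exact ⟨hz i hi, (sub_eq_zero.1 ((mul_eq_zero.1 (hterm i hi)).resolve_left hwi)).symm⟩

variable [TopologicalSpace E]

theorem isExposed_convexHull_sep {G : Set E} (l : E →L[ℝ] ℝ) {c : ℝ}
    (hl : ∀ y ∈ G, l y ≤ c) :
    IsExposed ℝ (convexHull ℝ G) (convexHull ℝ {y ∈ G | l y = c}) := by
  rintro ⟨z, hz⟩
  have hle : ∀ x ∈ convexHull ℝ G, l x ≤ c :=
    fun x hx => convexHull_min hl (convex_halfSpace_le l.isLinear c) hx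
  have heq : ∀ x ∈ convexHull ℝ {y ∈ G | l y = c}, l x = c :=
    fun x hx => convexHull_min (fun y hy => hy.2) (convex_hyperplane l.isLinear c) hx
  have hsub : convexHull ℝ {y ∈ G | l y = c} ⊆ convexHull ℝ G :=
    convexHull_mono (Set.sep_subset _ _)
  refine ⟨l, Set.ext fun x => ⟨fun hx => ⟨hsub hx, fun y hy => heq x hx ▸ hle y hy⟩, ?_⟩⟩
  rintro ⟨hx, hmax⟩
  have hlx : l x = c := le_antisymm (hle x hx) (heq z hz ▸ hmax z (hsub hz))
  exact mem_convexHull_sep_of_forall_le (l : E →ₗ[ℝ] ℝ) hl hx hlx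

theorem mem_exposedPoints_convexHull_of_lt {G : Set E} (l : E →L[ℝ] ℝ) {x : E} (hx : x ∈ G)
    (hl : ∀ y ∈ G, y ≠ x → l y < l x) : x ∈ (convexHull ℝ G).exposedPoints ℝ := by
  have hG : {y ∈ G | l y = l x} = {x} := by
    ext y
    refine ⟨fun ⟨hy, hly⟩ => by_contra fun hyx => (hl y hy hyx).ne hly, ?_⟩
    rintro rfl
    exact ⟨hx, rfl⟩
  rw [mem_exposedPoints_iff_exposed_singleton, ← convexHull_singleton (𝕜 := ℝ), ← hG]
  exact isExposed_convexHull_sep l fun y hy =>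
    (eq_or_ne y x).elim (fun h => h ▸ le_rfl) fun h => (hl y hy h).le

end Convex

theorem sum_lt_sum_of_pos_of_neg {ι M : Type*} [AddCommGroup M] [LinearOrder M]
    [IsOrderedAddMonoid M] {v : ι → M} {S T : Finset ι} (hpos : ∀ a ∈ S, 0 < v a)
    (hneg : ∀ a ∉ S, v a < 0) (hTS : T ≠ S) : ∑ a ∈ T, v a < ∑ a ∈ S, v a := by
  classical
  rw [← sub_neg, ← sum_sdiff_sub_sum_sdiff, sub_neg]
  have hout : ∑ a ∈ T \ S, v a ≤ 0 := sum_nonpos fun a ha => (hneg a (mem_sdiff.1 ha).2).le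
  have hin : 0 ≤ ∑ a ∈ S \ T, v a := sum_nonneg fun a ha => (hpos a (mem_sdiff.1 ha).1).le
  by_cases hST : S ⊆ T
  · have hout' : ∑ a ∈ T \ S, v a < 0 :=
      sum_neg (fun a ha => hneg a (mem_sdiff.1 ha).2)
        (sdiff_nonempty.2 fun h => hTS (h.antisymm hST))
    exact hout'.trans_le hin
  · have hin' : 0 < ∑ a ∈ S \ T, v a :=
      sum_pos (fun a ha => hpos a (mem_sdiff.1 ha).1) (sdiff_nonempty.2 hST)
    exact hout.trans_lt hin'

open Matrix

variable {n : ℕ} {Q : Matrix (Fin (n+1)) (Fin (n+1)) ℤ}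

namespace IsLaplacian

theorem mulVec_apply_eq_sum_mul_sub (hQ : IsLaplacian n Q) (x : Fin (n+1) → ℝ)
    (a : Fin (n+1)) : (Q.map ((↑) : ℤ → ℝ) *ᵥ x) a = ∑ c, (Q a c : ℝ) * (x c - x a) := by
  have hrow : ∑ c, (Q a c : ℝ) = 0 := by exact_mod_cast hQ.2.2 a
  simp only [mul_sub, sum_sub_distrib, ← sum_mul, hrow, zero_mul, sub_zero]
  rfl

theorem apply_eq_of_forall_le (hQ : IsLaplacian n Q) {x : Fin (n+1) → ℝ} {a b : Fin (n+1)}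
    (hx : (Q.map ((↑) : ℤ → ℝ) *ᵥ x) a = 0) (hmax : ∀ c, x c ≤ x a) (hQab : Q a b ≠ 0) :
    x b = x a := by
  rw [hQ.mulVec_apply_eq_sum_mul_sub] at hx
  have hterm : ∀ c ∈ univ, 0 ≤ (Q a c : ℝ) * (x c - x a) := by
    intro c _
    rcases eq_or_ne a c with rfl | hac
    · simp
    · exact mul_nonneg_of_nonpos_of_nonpos (by exact_mod_cast hQ.2.1 a c hac)
        (sub_nonpos.2 (hmax c))
  have hb := (sum_eq_zero_iff_of_nonneg hterm).1 hx b (mem_univ b)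
  exact sub_eq_zero.1 ((mul_eq_zero.1 hb).resolve_left (by exact_mod_cast hQab))

theorem vecMul_one (hQ : IsLaplacian n Q) :
    (1 : Fin (n+1) → ℝ) ᵥ* Q.map ((↑) : ℤ → ℝ) = 0 := by
  ext c
  have hcol : ∑ a, Q a c = 0 := by simpa only [hQ.1 _ c] using hQ.2.2 c
  simp only [vecMul, one_dotProduct, Pi.zero_apply, map_apply]
  exact_mod_cast hcol

end IsLaplacian

theorem uCut_dotProduct (w : Fin (n+1) → ℝ) (S : Finset (Fin (n+1))) :
    uCut n Q S ⬝ᵥ w = ∑ a ∈ S, (Q.map ((↑) : ℤ → ℝ) *ᵥ w) a :=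
  sum_dotProduct _ _ _

namespace IsConnectedLaplacian

theorem eq_of_mulVec_eq_zero (hQ : IsConnectedLaplacian n Q) {x : Fin (n+1) → ℝ}
    (hx : Q.map ((↑) : ℤ → ℝ) *ᵥ x = 0) (a b : Fin (n+1)) : x a = x b := by
  obtain ⟨a₀, -, ha₀⟩ := exists_max_image univ x univ_nonempty
  have hreach : ∀ c d, (SimpleGraph.fromRel fun i j => Q i j ≠ 0).Reachable c d →
      x c = x a₀ → x d = x a₀ := by
    rintro c d ⟨p⟩
    induction p with
    | nil => exact id
    | cons hadj _ ih =>
      intro hc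
      obtain ⟨-, hQne⟩ := (SimpleGraph.fromRel_adj _ _ _).1 hadj
      refine ih (hQ.1.apply_eq_of_forall_le (congrFun hx _) (fun e => hc ▸ ha₀ e (mem_univ e))
        ?_ |>.trans hc)
      exact hQne.elim id fun h => hQ.1.1 _ _ ▸ h
  rw [hreach a₀ a (hQ.2.preconnected _ _) rfl, hreach a₀ b (hQ.2.preconnected _ _) rfl]

theorem exists_mulVec_eq (hQ : IsConnectedLaplacian n Q) {v : Fin (n+1) → ℝ}
    (hv : ∑ a, v a = 0) : ∃ w, Q.map ((↑) : ℤ → ℝ) *ᵥ w = v := by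
  set L := (Q.map ((↑) : ℤ → ℝ)).mulVecLin
  set s : Module.Dual ℝ (Fin (n+1) → ℝ) := dotProductEquiv ℝ (Fin (n+1)) 1
  have hs : ∀ y, s y = ∑ a, y a := one_dotProduct
  have hle : LinearMap.range L ≤ LinearMap.ker s := by
    rintro _ ⟨w, rfl⟩
    rw [LinearMap.mem_ker]
    exact (dotProduct_mulVec 1 _ w).trans (by rw [hQ.1.vecMul_one, zero_dotProduct])
  have hker : LinearMap.ker L ≤ Submodule.span ℝ {1} := fun x hx =>
    Submodule.mem_span_singleton.2 ⟨x 0, funext fun a => by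
      simp [hQ.eq_of_mulVec_eq_zero hx 0 a]⟩
  have hrange : n ≤ Module.finrank ℝ (LinearMap.range L) := by
    have hsum := L.finrank_range_add_finrank_ker
    have hkerle := (Submodule.finrank_mono hker).trans_eq (finrank_span_singleton one_ne_zero)
    rw [Module.finrank_fin_fun] at hsum
    omega
  have hs_ne : LinearMap.ker s ≠ ⊤ := by
    rw [Ne, LinearMap.ker_eq_top]
    intro h
    simpa [hs] using LinearMap.congr_fun h (Pi.single 0 1)
  have hkers : Module.finrank ℝ (LinearMap.ker s) ≤ n := by
    simpa using Submodule.finrank_lt hs_ne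
  obtain ⟨w, hw⟩ := (Submodule.eq_of_le_of_finrank_le hle (hkers.trans hrange)).ge
    (show v ∈ LinearMap.ker s from (hs v).trans hv)
  exact ⟨w, hw⟩

theorem exists_dual_uCut (hQ : IsConnectedLaplacian n Q) {v : Fin (n+1) → ℝ}
    (hv : ∑ a, v a = 0) :
    ∃ l : StrongDual ℝ (Fin (n+1) → ℝ), ∀ S, l (uCut n Q S) = ∑ a ∈ S, v a := by
  obtain ⟨w, hw⟩ := hQ.exists_mulVec_eq hv
  refine ⟨LinearMap.toContinuousLinearMap (dotProductEquiv ℝ (Fin (n+1)) w), fun S => ?_⟩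
  simp [dotProduct_comm w, uCut_dotProduct, hw]

theorem exists_dual_uCut_eq_ite (hQ : IsConnectedLaplacian n Q) (i j : Fin (n+1)) :
    ∃ l : StrongDual ℝ (Fin (n+1) → ℝ), ∀ S,
      l (uCut n Q S) = (if i ∈ S then 1 else 0) - (if j ∈ S then 1 else 0) := by
  obtain ⟨l, hl⟩ := hQ.exists_dual_uCut (v := Pi.single i 1 - Pi.single j 1) (by simp)
  exact ⟨l, fun S => by simp [hl, sum_sub_distrib, sum_pi_single']⟩

theorem exists_dual_uCut_lt (hQ : IsConnectedLaplacian n Q) {S : Finset (Fin (n+1))}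
    (hS : S.Nonempty) (hSu : S ≠ univ) :
    ∃ l : StrongDual ℝ (Fin (n+1) → ℝ), ∀ T, T ≠ S → l (uCut n Q T) < l (uCut n Q S) := by
  set v : Fin (n+1) → ℝ := fun a => (if a ∈ S then 1 else 0) - (#S : ℝ) / (n + 1)
  have hcard : (#S : ℝ) < n + 1 := by
    exact_mod_cast (card_lt_card (ssubset_univ_iff.2 hSu)).trans_eq (by simp)
  have hv : ∑ a, v a = 0 := by
    simp only [v, sum_sub_distrib, sum_ite_mem, univ_inter, sum_const, card_univ,
      Fintype.card_fin, nsmul_eq_mul, mul_one]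
    push_cast
    field_simp
    ring
  obtain ⟨l, hl⟩ := hQ.exists_dual_uCut hv
  refine ⟨l, fun T hTS => ?_⟩
  rw [hl, hl]
  refine sum_lt_sum_of_pos_of_neg (fun a ha => ?_) (fun a ha => ?_) hTS
  · simp only [v, if_pos ha]
    rw [sub_pos, div_lt_one (by positivity)]
    exact hcard
  · simp only [v, if_neg ha, zero_sub, neg_lt_zero]
    exact div_pos (by exact_mod_cast hS.card_pos) (by positivity)

end IsConnectedLaplacian

theorem cut_face_is_facet_general (n : ℕ)
    (Q : Matrix (Fin (n+1)) (Fin (n+1)) ℤ) (hQ : IsConnectedLaplacian n Q)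
    (i j : Fin (n+1)) :
    (∃ (f : (Fin (n+1) → ℝ) →ₗ[ℝ] ℝ) (c : ℝ),
        (∀ S : Finset (Fin (n+1)), S.Nonempty → S ≠ Finset.univ →
          i ∈ S → j ∉ S → f (uCut n Q S) = c) ∧
        (∀ T : Finset (Fin (n+1)), T.Nonempty → T ≠ Finset.univ →
          ¬(i ∈ T ∧ j ∉ T) → f (uCut n Q T) < c)) ∧
    IsExposed ℝ (HDelConv n Q) (convexHull ℝ (cutFace n Q i j)) ∧
    ∀ x ∈ cutFace n Q i j,
      x ∈ Set.extremePoints ℝ (convexHull ℝ (cutFace n Q i j)) := by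
  obtain ⟨f, hf⟩ := hQ.exists_dual_uCut_eq_ite i j
  have hf_eq : ∀ S, i ∈ S → j ∉ S → f (uCut n Q S) = 1 := fun S hi hj => by simp [hf, hi, hj]
  have hf_lt : ∀ S, ¬(i ∈ S ∧ j ∉ S) → f (uCut n Q S) < 1 := fun S hS => by
    by_cases hi : i ∈ S <;> by_cases hj : j ∈ S <;> simp_all
  have hface : cutFace n Q i j = {y | (∃ S, S.Nonempty ∧ y = uCut n Q S) ∧ f y = 1} := by
    ext y
    constructor
    · rintro ⟨S, hS, -, hi, hj, rfl⟩
      exact ⟨⟨S, hS, rfl⟩, hf_eq S hi hj⟩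
    · rintro ⟨⟨S, hS, rfl⟩, hy⟩
      obtain ⟨hi, hj⟩ : i ∈ S ∧ j ∉ S := not_not.1 fun h => (hf_lt S h).ne hy
      exact ⟨S, hS, fun h => hj (h ▸ mem_univ j), hi, hj, rfl⟩
  refine ⟨⟨f, 1, fun S _ _ => hf_eq S, fun T _ _ => hf_lt T⟩, ?_, ?_⟩
  · rw [hface]
    refine isExposed_convexHull_sep f ?_
    rintro _ ⟨S, -, rfl⟩
    by_cases h : i ∈ S ∧ j ∉ S
    exacts [(hf_eq S h.1 h.2).le, (hf_lt S h).le]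
  · rintro _ ⟨S, hS, hSu, hi, hj, rfl⟩
    obtain ⟨g, hg⟩ := hQ.exists_dual_uCut_lt hS hSu
    refine exposedPoints_subset_extremePoints
      (mem_exposedPoints_convexHull_of_lt g ⟨S, hS, hSu, hi, hj, rfl⟩ ?_)
    rintro _ ⟨T, -, -, -, -, rfl⟩ hTS
    exact hg T fun h => hTS (h ▸ rfl)

/-- for distinct `i, j` there are a linear functional `f` and a
constant `c` with `f = c` on `F_{i,j}` and `f < c` at all other vertices `u_T`;
consequently `conv F_{i,j}` is an exposed face of the Delaunay polytope, and all
elements of `F_{i,j}` are in convex position. -/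
theorem cut_face_is_facet (n : ℕ) (hn : 2 ≤ n)
    (Q : Matrix (Fin (n+1)) (Fin (n+1)) ℤ) (hQ : IsConnectedLaplacian n Q)
    (i j : Fin (n+1)) (hij : i ≠ j) :
    (∃ (f : (Fin (n+1) → ℝ) →ₗ[ℝ] ℝ) (c : ℝ),
        (∀ S : Finset (Fin (n+1)), S.Nonempty → S ≠ Finset.univ →
          i ∈ S → j ∉ S → f (uCut n Q S) = c) ∧
        (∀ T : Finset (Fin (n+1)), T.Nonempty → T ≠ Finset.univ →
          ¬(i ∈ T ∧ j ∉ T) → f (uCut n Q T) < c)) ∧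
    IsExposed ℝ (HDelConv n Q) (convexHull ℝ (cutFace n Q i j)) ∧
    ∀ x ∈ cutFace n Q i j,
      x ∈ Set.extremePoints ℝ (convexHull ℝ (cutFace n Q i j)) :=
  cut_face_is_facet_general n Q hQ i j
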